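/- Consecutive points of the silver mean point set S = {u + v√2 : u, v ∈ ℤ, |u − v√2| ≤ 1/√2} differ by either 1 or 1 + √2: if s < t are elements of S with no element of S strictly between them, then t − s ∈ {1, 1 + √2}. -/

import Mathlib

/-!
Write `x* = u - v√2` for the Galois conjugate of `x = u + v√2`, so that `S` is the set of
`x ∈ ℤ[√2]` with `|x*| ≤ √2 / 2`. Since `√2` is irrational the bound is never attained, so the
conjugates of two points of `S` differ by less than `√2`. From `s ∈ S` one of `s + 1`, `s + 1 + √2`
lies in `S` (shifting `s*` by `1` or by `1 - √2`), so consecutive points are at most `1 + √2`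
apart. The only `a + b√2 ∈ (0, 1 + √2]` with `|a - b√2| < √2` are `1` and `1 + √2`.
-/

open Real

def silverMeanSet : Set ℝ :=
  {x : ℝ | ∃ u v : ℤ, x = u + v * √2 ∧ |(u : ℝ) - v * √2| ≤ 1 / √2}

lemma one_div_sqrt_two : 1 / √2 = √2 / 2 := by
  field_simp
  exact (sq_sqrt zero_le_two).symm

lemma abs_int_sub_int_mul_sqrt_two_ne (u v : ℤ) : |(u : ℝ) - v * √2| ≠ √2 / 2 := by
  intro h
  rcases abs_eq (by positivity) |>.mp h with h | h
  · exact (irrational_sqrt_two.intCast_mul (by omega : (2 * v + 1 : ℤ) ≠ 0)).ne_int (2 * u)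
      (by push_cast; linarith)
  · exact (irrational_sqrt_two.intCast_mul (by omega : (2 * v - 1 : ℤ) ≠ 0)).ne_int (2 * u)
      (by push_cast; linarith)

lemma mem_silverMeanSet_iff {x : ℝ} :
    x ∈ silverMeanSet ↔ ∃ u v : ℤ, x = u + v * √2 ∧ |(u : ℝ) - v * √2| < √2 / 2 := by
  simp only [silverMeanSet, Set.mem_ofPred_eq, one_div_sqrt_two]
  refine exists₂_congr fun u v => and_congr_right fun _ => ?_
  exact ⟨fun h => h.lt_of_ne (abs_int_sub_int_mul_sqrt_two_ne u v), le_of_lt⟩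

lemma add_one_mem_or_add_one_add_sqrt_two_mem {s : ℝ} (hs : s ∈ silverMeanSet) :
    s + 1 ∈ silverMeanSet ∨ s + (1 + √2) ∈ silverMeanSet := by
  obtain ⟨u, v, rfl, huv⟩ := mem_silverMeanSet_iff.mp hs
  rw [abs_lt] at huv
  have := one_lt_sqrt_two
  simp only [silverMeanSet, one_div_sqrt_two, Set.mem_ofPred_eq]
  by_cases hc : (u : ℝ) - v * √2 < √2 / 2 - 1
  · refine .inl ⟨u + 1, v, by push_cast; ring, ?_⟩
    push_cast; rw [abs_le]; constructor <;> linarith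
  · refine .inr ⟨u + 1, v + 1, by push_cast; ring, ?_⟩
    push_cast; rw [abs_le]; constructor <;> linarith

lemma exists_sub_eq_of_mem_silverMeanSet {s t : ℝ} (hs : s ∈ silverMeanSet)
    (ht : t ∈ silverMeanSet) : ∃ a b : ℤ, t - s = a + b * √2 ∧ |(a : ℝ) - b * √2| < √2 := by
  obtain ⟨u₁, v₁, rfl, h₁⟩ := mem_silverMeanSet_iff.mp hs
  obtain ⟨u₂, v₂, rfl, h₂⟩ := mem_silverMeanSet_iff.mp ht
  refine ⟨u₂ - u₁, v₂ - v₁, by push_cast; ring, ?_⟩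
  rw [abs_lt] at h₁ h₂ ⊢
  push_cast
  constructor <;> linarith

lemma int_add_int_mul_sqrt_two_eq_of_bounds {a b : ℤ} (hpos : 0 < (a : ℝ) + b * √2)
    (hle : (a : ℝ) + b * √2 ≤ 1 + √2) (hconj : |(a : ℝ) - b * √2| < √2) :
    (a : ℝ) + b * √2 = 1 ∨ (a : ℝ) + b * √2 = 1 + √2 := by
  have h₁ := one_lt_sqrt_two
  have h₂ := sqrt_two_lt_three_halves
  rw [abs_lt] at hconj
  have ha₀ : (-1 : ℝ) < a := by linarith
  have ha₁ : (a : ℝ) < 2 := by linarith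
  have hb₀ : (-1 : ℝ) < b := by nlinarith
  have hb₁ : (b : ℝ) < 2 := by nlinarith
  have ha₀' : -1 < a := by exact_mod_cast ha₀
  have ha₁' : a < 2 := by exact_mod_cast ha₁
  have hb₀' : -1 < b := by exact_mod_cast hb₀
  have hb₁' : b < 2 := by exact_mod_cast hb₁
  interval_cases a <;> interval_cases b <;> simp_all

/-- Consecutive points of the silver mean point set differ by `1` or `1 + √2`. -/
theorem stmt_13 (S : Set ℝ)
    (hS : S = {x : ℝ | ∃ u v : ℤ, x = u + v * Real.sqrt 2 ∧
      |(u : ℝ) - v * Real.sqrt 2| ≤ 1 / Real.sqrt 2})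
    (s t : ℝ) (hs : s ∈ S) (ht : t ∈ S) (hlt : s < t)
    (hgap : ∀ x ∈ S, ¬(s < x ∧ x < t)) :
    t - s = 1 ∨ t - s = 1 + Real.sqrt 2 := by
  change S = silverMeanSet at hS
  subst hS
  have hbound : t - s ≤ 1 + √2 := by
    by_contra! hfar
    rcases add_one_mem_or_add_one_add_sqrt_two_mem hs with h | h <;>
      exact hgap _ h ⟨by linarith [one_lt_sqrt_two], by linarith [one_lt_sqrt_two]⟩
  obtain ⟨a, b, hab, hconj⟩ := exists_sub_eq_of_mem_silverMeanSet hs ht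
  rw [hab] at hbound ⊢
  exact int_add_int_mul_sqrt_two_eq_of_bounds (hab ▸ sub_pos.mpr hlt) hbound hconj
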